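/- Assume t₀^θ ≥ a(C² + b) and r^α ∈ H. Then for all t ∈ ℕ, the deterministic sequence g_t satisfies ‖L_K g_{t−1}‖²_H ≤ C²/α². -/

import Mathlib

open MeasureTheory Real
open scoped RealInnerProductSpace

/-!
For the covariance operator `L v = ∫ ⟪v, k y⟫ • k y`, the bound `‖k y‖ ≤ C` and Jensen's
inequality give `‖L v‖ ≤ C ∫ |⟪v, k y⟫| ≤ C (∫ ⟪v, k y⟫²)^{1/2}`, i.e.
`‖L v‖² ≤ C² ⟪v, L v⟫`. This makes `Id - η (L + λ Id)` a contraction with factor `1 - ηλ` on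
vectors of the form `L u` as soon as `η (C² + λ) ≤ 1`, which the condition on `t₀` guarantees
for every step. Applying `L` to the recursion bounds `‖L g_t‖` by a convex combination of
`‖L g_{t-1}‖` and `‖L r‖ ≤ C / α`, so the ball of radius `C / α` is invariant.
-/

theorem sq_integral_le_integral_sq {Ω : Type*} [MeasurableSpace Ω] {μ : Measure Ω}
    [IsProbabilityMeasure μ] {f : Ω → ℝ} (hf : MemLp f 2 μ) :
    (∫ ω, f ω ∂μ) ^ 2 ≤ ∫ ω, f ω ^ 2 ∂μ := by
  have h := ProbabilityTheory.variance_nonneg f μ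
  rw [ProbabilityTheory.variance_eq_sub hf] at h
  simpa only [Pi.pow_apply, sub_nonneg] using h

theorem isProbabilityMeasure_mixture {X : Type*} [MeasurableSpace X] (P Q : Measure X)
    [IsProbabilityMeasure P] [IsProbabilityMeasure Q] {α : ℝ} (hα0 : 0 ≤ α) (hα1 : α ≤ 1) :
    IsProbabilityMeasure (ENNReal.ofReal (1 - α) • P + ENNReal.ofReal α • Q) := by
  constructor
  simp only [Measure.add_apply, Measure.smul_apply, measure_univ, smul_eq_mul, mul_one]
  rw [← ENNReal.ofReal_add (by linarith) hα0]
  norm_num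

section CovarianceOperator

variable {X H : Type*} [MeasurableSpace X] [NormedAddCommGroup H] [InnerProductSpace ℝ H]
  {μ : Measure X} [IsProbabilityMeasure μ] {k : X → H} {C : ℝ}
  {L : H →L[ℝ] H}

theorem norm_covariance_apply_le (hk : ∀ x, ‖k x‖ ≤ C)
    (hL : ∀ f, L f = ∫ y, ⟪f, k y⟫ • k y ∂μ) {r : H} {B : ℝ} (hr : ∀ y, |⟪r, k y⟫| ≤ B) :
    ‖L r‖ ≤ B * C := by
  obtain ⟨x⟩ := nonempty_of_isProbabilityMeasure μ
  have hB : 0 ≤ B := (abs_nonneg _).trans (hr x)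
  have hbound : ∀ y, ‖⟪r, k y⟫ • k y‖ ≤ B * C := fun y => by
    rw [norm_smul, Real.norm_eq_abs]
    exact mul_le_mul (hr y) (hk y) (norm_nonneg _) hB
  simpa [hL] using norm_integral_le_of_norm_le_const (μ := μ) (Filter.Eventually.of_forall hbound)

theorem norm_covariance_apply_sq_le [CompleteSpace H] (hk : ∀ x, ‖k x‖ ≤ C)
    (hL : ∀ f, L f = ∫ y, ⟪f, k y⟫ • k y ∂μ) (v : H) :
    ‖L v‖ ^ 2 ≤ C ^ 2 * ⟪v, L v⟫ := by
  set F : X → H := fun y => ⟪v, k y⟫ • k y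
  by_cases hF : Integrable F μ
  swap
  · simp [hL, F, integral_undef hF]
  have hquad : ⟪v, L v⟫ = ∫ y, ⟪v, F y⟫ ∂μ := by rw [hL, integral_inner hF]
  have hFk : ∀ y, ‖F y‖ ^ 2 ≤ C ^ 2 * ⟪v, F y⟫ := fun y => by
    simp only [F, norm_smul, real_inner_smul_right, Real.norm_eq_abs, mul_pow, sq_abs]
    nlinarith [pow_le_pow_left₀ (norm_nonneg _) (hk y) 2, sq_nonneg ⟪v, k y⟫]
  have hFbdd : ∀ y, ‖‖F y‖‖ ≤ ‖v‖ * C ^ 2 := fun y => by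
    rw [norm_norm, norm_smul, Real.norm_eq_abs]
    calc |⟪v, k y⟫| * ‖k y‖ ≤ ‖v‖ * ‖k y‖ * ‖k y‖ := by
          gcongr; exact abs_real_inner_le_norm _ _
      _ ≤ ‖v‖ * C ^ 2 := by rw [mul_assoc, ← sq]; gcongr; exact hk y
  have hF2 : MemLp (fun y => ‖F y‖) 2 μ :=
    MemLp.of_bound hF.norm.aestronglyMeasurable _ (Filter.Eventually.of_forall hFbdd)
  calc ‖L v‖ ^ 2 ≤ (∫ y, ‖F y‖ ∂μ) ^ 2 := by
        rw [hL]
        exact pow_le_pow_left₀ (norm_nonneg _) (norm_integral_le_integral_norm _) 2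
    _ ≤ ∫ y, ‖F y‖ ^ 2 ∂μ := sq_integral_le_integral_sq hF2
    _ ≤ ∫ y, C ^ 2 * ⟪v, F y⟫ ∂μ :=
        integral_mono hF2.integrable_sq ((hF.const_inner v).const_mul _) hFk
    _ = C ^ 2 * ⟪v, L v⟫ := by rw [integral_const_mul, hquad]

end CovarianceOperator

section Iteration

variable {H : Type*} [NormedAddCommGroup H] [InnerProductSpace ℝ H] {L : H →L[ℝ] H} {C : ℝ}

theorem inner_apply_self_nonneg_of_norm_sq_le (hL : ∀ v, ‖L v‖ ^ 2 ≤ C ^ 2 * ⟪v, L v⟫)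
    (v : H) : 0 ≤ ⟪v, L v⟫ := by
  by_contra! hneg
  have hLv : L v = 0 := by
    have h := (hL v).trans (mul_nonpos_of_nonneg_of_nonpos (sq_nonneg C) hneg.le)
    simpa using h
  simp [hLv] at hneg

theorem norm_sub_smul_add_le (hL : ∀ v, ‖L v‖ ^ 2 ≤ C ^ 2 * ⟪v, L v⟫) {e l : ℝ} (he : 0 ≤ e)
    (hel : e * C ^ 2 + e * l ≤ 1) (u : H) :
    ‖u - e • (L u + l • u)‖ ≤ (1 - e * l) * ‖u‖ := by
  have hpos := inner_apply_self_nonneg_of_norm_sq_le hL u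
  have hc : 0 ≤ 1 - e * l := by nlinarith [mul_nonneg he (sq_nonneg C)]
  have hw : u - e • (L u + l • u) = (1 - e * l) • u - e • L u := by module
  have hsq : ‖(1 - e * l) • u - e • L u‖ ^ 2
      = (1 - e * l) ^ 2 * ‖u‖ ^ 2 - 2 * ((1 - e * l) * e) * ⟪u, L u⟫ + e ^ 2 * ‖L u‖ ^ 2 := by
    rw [norm_sub_sq_real, real_inner_smul_left, real_inner_smul_right, norm_smul, norm_smul,
      Real.norm_of_nonneg hc, Real.norm_of_nonneg he]
    ring
  have hcross : e ^ 2 * ‖L u‖ ^ 2 ≤ 2 * ((1 - e * l) * e) * ⟪u, L u⟫ := by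
    nlinarith [mul_le_mul_of_nonneg_left (hL u) (sq_nonneg e),
      mul_le_mul_of_nonneg_right (show e * C ^ 2 ≤ 1 - e * l by linarith) hpos,
      mul_nonneg he hpos]
  rw [hw, ← sq_le_sq₀ (norm_nonneg _) (mul_nonneg hc (norm_nonneg u)), hsq]
  nlinarith

theorem norm_apply_step_le (hL : ∀ v, ‖L v‖ ^ 2 ≤ C ^ 2 * ⟪v, L v⟫) {e l R : ℝ} (he : 0 ≤ e)
    (hl : 0 ≤ l) (hel : e * C ^ 2 + e * l ≤ 1) {u r : H} (hu : ‖L u‖ ≤ R) (hr : ‖L r‖ ≤ R) :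
    ‖L (u - e • (L u + l • u) - (e * l) • r)‖ ≤ R := by
  have hc : 0 ≤ 1 - e * l := by nlinarith [mul_nonneg he (sq_nonneg C)]
  have hLstep : L (u - e • (L u + l • u) - (e * l) • r)
      = L u - e • (L (L u) + l • L u) - (e * l) • L r := by
    simp only [map_sub, map_add, map_smul]
  calc ‖L (u - e • (L u + l • u) - (e * l) • r)‖
      ≤ ‖L u - e • (L (L u) + l • L u)‖ + ‖(e * l) • L r‖ := by
        rw [hLstep]; exact norm_sub_le _ _
    _ ≤ (1 - e * l) * ‖L u‖ + (e * l) * ‖L r‖ := by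
        rw [norm_smul, Real.norm_of_nonneg (mul_nonneg he hl)]
        gcongr
        exact norm_sub_smul_add_le hL he hel (L u)
    _ ≤ (1 - e * l) * R + (e * l) * R := by gcongr
    _ = R := by ring

end Iteration

theorem step_size_mul_le_one {a b C θ t₀ s : ℝ} (ha : 0 ≤ a) (hb : 0 ≤ b) (hθ0 : 0 ≤ θ)
    (hθ1 : θ ≤ 1) (ht₀ : 0 ≤ t₀) (hs1 : 1 ≤ s) (ht₀s : t₀ ≤ s)
    (ht₀θ : a * (C ^ 2 + b) ≤ t₀ ^ θ) :
    a / s ^ θ * C ^ 2 + a / s ^ θ * (b / s ^ (1 - θ)) ≤ 1 := by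
  have hs0 : 0 < s := by linarith
  have hsθ : 0 < s ^ θ := rpow_pos_of_pos hs0 θ
  have hprod : a / s ^ θ * (b / s ^ (1 - θ)) = a * b / s := by
    rw [div_mul_div_comm, ← rpow_add hs0, add_sub_cancel, rpow_one]
  have hsθs : s ^ θ ≤ s := by simpa using rpow_le_rpow_of_exponent_le hs1 hθ1
  calc a / s ^ θ * C ^ 2 + a / s ^ θ * (b / s ^ (1 - θ))
      ≤ a / s ^ θ * C ^ 2 + a * b / s ^ θ := by
        rw [hprod]; gcongr
    _ = a * (C ^ 2 + b) / s ^ θ := by ring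
    _ ≤ 1 := by
        rw [div_le_one hsθ]
        exact ht₀θ.trans (rpow_le_rpow ht₀ ht₀s hθ0)

theorem covariance_of_g_bound_general
    {X : Type*} [MeasurableSpace X]
    {H : Type*} [NormedAddCommGroup H] [InnerProductSpace ℝ H] [CompleteSpace H]
    (k : X → H) (C : ℝ) (hC : ∀ x : X, ‖k x‖ ≤ C)
    (P Q : Measure X) [IsProbabilityMeasure P] [IsProbabilityMeasure Q]
    (α : ℝ) (hα0 : 0 < α) (hα1 : α < 1)
    (Pα : Measure X) (hPα : Pα = ENNReal.ofReal (1 - α) • P + ENNReal.ofReal α • Q)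
    (rα : H) (hrα0 : ∀ y : X, 0 ≤ ⟪rα, k y⟫) (hrα : ∀ y : X, ⟪rα, k y⟫ ≤ 1 / α)
    (LK : H →L[ℝ] H) (hLK : ∀ f : H, LK f = ∫ y, ⟪f, k y⟫ • k y ∂Pα)
    (a b θ t₀ : ℝ) (ha : 0 < a) (hb : 0 < b) (ht₀pos : 0 < t₀)
    (hθ0 : 0 ≤ θ) (hθ1 : θ ≤ 1)
    (ht₀θ : a * (C ^ 2 + b) ≤ t₀ ^ θ)
    (η lam : ℕ → ℝ)
    (hη : ∀ t : ℕ, η t = a / ((t : ℝ) + t₀) ^ θ)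
    (hlam : ∀ t : ℕ, lam t = b / ((t : ℝ) + t₀) ^ (1 - θ))
    (g : ℕ → H) (hg0 : g 0 = -rα)
    (hg : ∀ t : ℕ, g (t + 1)
        = g t - η (t + 1) • (LK (g t) + lam (t + 1) • g t) - (η (t + 1) * lam (t + 1)) • rα) :
    ∀ t : ℕ, ‖LK (g t)‖ ^ 2 ≤ C ^ 2 / α ^ 2 := by
  subst hPα
  have := isProbabilityMeasure_mixture P Q hα0.le hα1.le
  have hLK_sq := norm_covariance_apply_sq_le hC hLK
  have hr : ‖LK rα‖ ≤ 1 / α * C :=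
    norm_covariance_apply_le hC hLK fun y => (abs_of_nonneg (hrα0 y)).trans_le (hrα y)
  have hη0 : ∀ t, 0 ≤ η t := fun t => by rw [hη]; positivity
  have hlam0 : ∀ t, 0 ≤ lam t := fun t => by rw [hlam]; positivity
  have hstep : ∀ t : ℕ, η (t + 1) * C ^ 2 + η (t + 1) * lam (t + 1) ≤ 1 := fun t => by
    rw [hη, hlam]
    exact step_size_mul_le_one ha.le hb.le hθ0 hθ1 ht₀pos.le
      (le_add_of_le_of_nonneg (by exact_mod_cast t.succ_pos) ht₀pos.le)
      (le_add_of_nonneg_left (Nat.cast_nonneg _)) ht₀θ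
  have hbound : ∀ t, ‖LK (g t)‖ ≤ 1 / α * C := fun t => by
    induction t with
    | zero => rwa [hg0, map_neg, norm_neg]
    | succ t ih => rw [hg t]; exact norm_apply_step_le hLK_sq (hη0 _) (hlam0 _) (hstep t) ih hr
  intro t
  calc ‖LK (g t)‖ ^ 2 ≤ (1 / α * C) ^ 2 := pow_le_pow_left₀ (norm_nonneg _) (hbound t) 2
    _ = C ^ 2 / α ^ 2 := by ring

/-- **Lemma `lemma:LR_g_t`**: bound on `‖L_K g_{t-1}‖²_H` for the deterministic sequence
`g_t`.

Setting: `H` is an RKHS with feature map `k` and kernel bound `C`; `Pα = (1-α)P + αQ`;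
`rα ∈ H` (with `0 ≤ rα ≤ 1/α` pointwise) is the relative likelihood ratio; `LK` is the
covariance operator, `L_K f = E_{Pα}[f(y) K(y,·)]`.  With `η_t = a/(t+t₀)^θ` and
`λ_t = b/(t+t₀)^{1-θ}`, the deterministic sequence is `g₀ = -rα`,
`g_t = [Id - η_t(L_K + λ_t Id)] g_{t-1} - η_t λ_t rα`.

Assuming `t₀^θ ≥ a(C² + b)`, every term of the sequence satisfies
`‖L_K g_{t-1}‖²_H ≤ C²/α²` (stated below as `‖L_K (g t)‖² ≤ C²/α²` for all `t : ℕ`,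
which is the same claim re-indexed). -/
theorem covariance_of_g_bound
    {X : Type*} [MeasurableSpace X]
    {H : Type*} [NormedAddCommGroup H] [InnerProductSpace ℝ H] [CompleteSpace H]
    (k : X → H) (C : ℝ) (hCpos : 0 < C) (hC : ∀ x : X, ‖k x‖ ≤ C)
    (P Q : Measure X) [IsProbabilityMeasure P] [IsProbabilityMeasure Q]
    (α : ℝ) (hα0 : 0 < α) (hα1 : α < 1)
    (Pα : Measure X) (hPα : Pα = ENNReal.ofReal (1 - α) • P + ENNReal.ofReal α • Q)
    (rα : H) (hrα0 : ∀ y : X, 0 ≤ ⟪rα, k y⟫) (hrα : ∀ y : X, ⟪rα, k y⟫ ≤ 1 / α)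
    (LK : H →L[ℝ] H) (hLK : ∀ f : H, LK f = ∫ y, ⟪f, k y⟫ • k y ∂Pα)
    (a b θ t₀ : ℝ) (ha : 0 < a) (hb : 0 < b) (ht₀pos : 0 < t₀)
    (hθ0 : 0 ≤ θ) (hθ1 : θ ≤ 1)
    (ht₀θ : a * (C ^ 2 + b) ≤ t₀ ^ θ)
    (η lam : ℕ → ℝ)
    (hη : ∀ t : ℕ, η t = a / ((t : ℝ) + t₀) ^ θ)
    (hlam : ∀ t : ℕ, lam t = b / ((t : ℝ) + t₀) ^ (1 - θ))
    (g : ℕ → H) (hg0 : g 0 = -rα)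
    (hg : ∀ t : ℕ, g (t + 1)
        = g t - η (t + 1) • (LK (g t) + lam (t + 1) • g t) - (η (t + 1) * lam (t + 1)) • rα) :
    ∀ t : ℕ, ‖LK (g t)‖ ^ 2 ≤ C ^ 2 / α ^ 2 :=
  covariance_of_g_bound_general k C hC P Q α hα0 hα1 Pα hPα rα hrα0 hrα LK hLK a b θ t₀ ha hb ht₀pos
    hθ0 hθ1 ht₀θ η lam hη hlam g hg0 hg
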